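/- arXiv:1312.5474 — 4 statements merged into one kernel-verified Lean document; each statement's English description precedes it below -/
import Mathlib

section
/- A subgroup S of a group X is characteristic in X if and only if for every group Y containing X as a normal subgroup, S is a normal subgroup of Y. -/
/-
A characteristic subgroup of a normal subgroup is normal, since conjugation by any element of the
ambient group restricts to an automorphism of the normal subgroup. Conversely, in the semidirect
product `X ⋊ Aut X` conjugation by `φ ∈ Aut X` acts on `X` as `φ` itself, so normality of `S` there
says exactly that `S` is invariant under every automorphism.
-/

namespace Subgroup

theorem Characteristic.map_mulEquiv {X Z : Type*} [Group X] [Group Z] {S : Subgroup X}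
    (hS : S.Characteristic) (e : X ≃* Z) : (S.map e.toMonoidHom).Characteristic := by
  refine characteristic_iff_map_eq.2 fun ψ ↦ ?_
  have hconj := characteristic_iff_map_eq.1 hS (e.trans (ψ.trans e.symm))
  calc (S.map e.toMonoidHom).map ψ.toMonoidHom
      = ((S.map (e.trans (ψ.trans e.symm)).toMonoidHom).map e.toMonoidHom) := by
        simp only [map_map]; congr 1; ext; simp
    _ = S.map e.toMonoidHom := by rw [hconj]

theorem Characteristic.map_normal_of_injective {X Y : Type*} [Group X] [Group Y]
    {S : Subgroup X} (hS : S.Characteristic) {f : X →* Y} (hf : Function.Injective f)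
    [f.range.Normal] : (S.map f).Normal := by
  have : (S.map (MonoidHom.ofInjective hf).toMonoidHom).Characteristic :=
    hS.map_mulEquiv (MonoidHom.ofInjective hf)
  convert ConjAct.normal_of_characteristic_of_normal (G := Y) (H := f.range)
    (K := S.map (MonoidHom.ofInjective hf).toMonoidHom)
  rw [map_map]
  rfl

theorem map_aut_le_of_normal_map_inl {N G : Type*} [Group N] [Group G] {φ : G →* MulAut N}
    {S : Subgroup N} (hS : (S.map (SemidirectProduct.inl : N →* N ⋊[φ] G)).Normal) (g : G) :
    S.map (φ g).toMonoidHom ≤ S := by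
  rintro _ ⟨s, hs, rfl⟩
  have hconj : (SemidirectProduct.inl (φ g s) : N ⋊[φ] G) ∈ S.map SemidirectProduct.inl := by
    rw [SemidirectProduct.inl_aut, map_inv]
    exact hS.conj_mem _ ⟨s, hs, rfl⟩ _
  obtain ⟨t, ht, hts⟩ := hconj
  exact SemidirectProduct.inl_injective hts ▸ ht

theorem characteristic_of_normal_map_inl {X : Type*} [Group X] {S : Subgroup X}
    (hS : (S.map (SemidirectProduct.inl : X →* X ⋊[MonoidHom.id (MulAut X)] MulAut X)).Normal) :
    S.Characteristic :=
  characteristic_iff_map_le.2 (map_aut_le_of_normal_map_inl hS)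

end Subgroup

theorem stmt6 {X : Type u} [Group X] (S : Subgroup X) :
    S.Characteristic ↔
      ∀ (Y : Type u) (_ : Group Y) (f : X →* Y),
        Function.Injective f → f.range.Normal → (S.map f).Normal := by
  refine ⟨fun hS Y _ f hf _ ↦ hS.map_normal_of_injective hf, fun h ↦ ?_⟩
  apply Subgroup.characteristic_of_normal_map_inl
  refine h _ inferInstance _ SemidirectProduct.inl_injective ?_
  rw [SemidirectProduct.range_inl_eq_ker_rightHom]
  infer_instance
end

section
/- Let A be the free abelian group on generators x, y, z, equipped with the unique ℤ-bilinear multiplication ∗ determined by x∗x = x, x∗y = y∗x = 0, x∗z = z∗x = y, y∗y = 0, y∗z = z∗y = x, z∗z = z (a non-associative ring). Let K be the additive subgroup generated by x and y. Then K is an ideal of A (closed under multiplication by arbitrary elements on both sides), but the additive subgroup [K,K] generated by products of pairs of elements of K, which equals the subgroup generated by x, is not an ideal of A: indeed x∗z = y ∉ ⟨x⟩. -/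
/-! The `z`-coordinate of `a ∗ b` is `a_z b_z` and its `y`-coordinate is `a_x b_z + a_z b_x`.
So `K = ⟨x, y⟩`, the kernel of the `z`-coordinate, absorbs products on either side, while a
product of two elements of `K` has vanishing `y`- and `z`-coordinates, i.e. lies in `⟨x⟩`;
since `x ∗ x = x`, `[K, K] = ⟨x⟩`, which `x ∗ z = y` leaves. -/

/-- The free abelian group on three generators `x, y, z`, realized as `Fin 3 → ℤ`. -/
abbrev NA11 : Type := Fin 3 → ℤ

/-- The generator `x`. -/
def x11 : NA11 := ![1, 0, 0]
/-- The generator `y`. -/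
def y11 : NA11 := ![0, 1, 0]
/-- The generator `z`. -/
def z11 : NA11 := ![0, 0, 1]

/-- The unique ℤ-bilinear multiplication with `x∗x = x`, `x∗y = y∗x = 0`,
`x∗z = z∗x = y`, `y∗y = 0`, `y∗z = z∗y = x`, `z∗z = z`. -/
def mul11 (a b : NA11) : NA11 :=
  ![a 0 * b 0 + a 1 * b 2 + a 2 * b 1, a 0 * b 2 + a 2 * b 0, a 2 * b 2]

lemma mul11_apply_one (a b : NA11) : mul11 a b 1 = a 0 * b 2 + a 2 * b 0 := rfl

lemma mul11_apply_two (a b : NA11) : mul11 a b 2 = a 2 * b 2 := rfl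

lemma mul11_add_left (a b c : NA11) : mul11 (a + b) c = mul11 a c + mul11 b c := by
  ext i; fin_cases i <;> simp [mul11] <;> ring

lemma mul11_add_right (a b c : NA11) : mul11 a (b + c) = mul11 a b + mul11 a c := by
  ext i; fin_cases i <;> simp [mul11] <;> ring

lemma mem_closure_x11_y11_iff (v : NA11) :
    v ∈ AddSubgroup.closure {x11, y11} ↔ v 2 = 0 := by
  constructor
  · intro hv
    have hle : AddSubgroup.closure {x11, y11} ≤ (Pi.evalAddMonoidHom (fun _ => ℤ) 2).ker := by
      rw [AddSubgroup.closure_le, Set.insert_subset_iff, Set.singleton_subset_iff]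
      exact ⟨rfl, rfl⟩
    exact hle hv
  · intro hv
    have hdecomp : v = v 0 • x11 + v 1 • y11 := by
      ext i; fin_cases i <;> simp [x11, y11, hv]
    rw [hdecomp]
    exact add_mem (zsmul_mem (AddSubgroup.subset_closure (.inl rfl)) _)
      (zsmul_mem (AddSubgroup.subset_closure (.inr rfl)) _)

lemma mem_closure_x11_iff (v : NA11) :
    v ∈ AddSubgroup.closure {x11} ↔ v 1 = 0 ∧ v 2 = 0 := by
  rw [AddSubgroup.mem_closure_singleton]
  constructor
  · rintro ⟨n, rfl⟩
    simp [x11]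
  · rintro ⟨h1, h2⟩
    refine ⟨v 0, ?_⟩
    ext i; fin_cases i <;> simp [x11, h1, h2]

theorem stmt11 :
    -- the multiplication is biadditive (distributive on both sides)
    (∀ a b c : NA11, mul11 (a + b) c = mul11 a c + mul11 b c) ∧
    (∀ a b c : NA11, mul11 a (b + c) = mul11 a b + mul11 a c) ∧
    -- it realizes the prescribed multiplication table
    mul11 x11 x11 = x11 ∧ mul11 x11 y11 = 0 ∧ mul11 y11 x11 = 0 ∧
    mul11 x11 z11 = y11 ∧ mul11 z11 x11 = y11 ∧ mul11 y11 y11 = 0 ∧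
    mul11 y11 z11 = x11 ∧ mul11 z11 y11 = x11 ∧ mul11 z11 z11 = z11 ∧
    -- K = ⟨x, y⟩ is an ideal of A
    (∀ a k : NA11, k ∈ AddSubgroup.closure {x11, y11} →
      mul11 a k ∈ AddSubgroup.closure {x11, y11} ∧
      mul11 k a ∈ AddSubgroup.closure {x11, y11}) ∧
    -- the Higgins commutator [K,K] is the subgroup generated by x
    AddSubgroup.closure {p : NA11 | ∃ k₁ ∈ AddSubgroup.closure {x11, y11},
        ∃ k₂ ∈ AddSubgroup.closure {x11, y11}, p = mul11 k₁ k₂}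
      = AddSubgroup.closure {x11} ∧
    -- and [K,K] is not an ideal: x ∗ z = y ∉ ⟨x⟩
    mul11 x11 z11 = y11 ∧ y11 ∉ AddSubgroup.closure {x11} := by
  have hxx : mul11 x11 x11 = x11 := by decide
  have hxz : mul11 x11 z11 = y11 := by decide
  refine ⟨mul11_add_left, mul11_add_right, hxx, by decide, by decide, hxz, by decide, by decide,
    by decide, by decide, by decide, ?_, ?_, hxz, ?_⟩
  · intro a k hk
    simp only [mem_closure_x11_y11_iff, mul11_apply_two, (mem_closure_x11_y11_iff k).1 hk,
      mul_zero, zero_mul, and_self]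
  · apply le_antisymm
    · rw [AddSubgroup.closure_le]
      rintro p ⟨k₁, h₁, k₂, h₂, rfl⟩
      rw [mem_closure_x11_y11_iff] at h₁ h₂
      simp [mem_closure_x11_iff, mul11_apply_one, mul11_apply_two, h₁, h₂]
    · rw [AddSubgroup.closure_le, Set.singleton_subset_iff]
      have hx : x11 ∈ AddSubgroup.closure {x11, y11} := AddSubgroup.subset_closure (.inl rfl)
      exact AddSubgroup.subset_closure ⟨x11, hx, x11, hx, hxx.symm⟩
  · simp [mem_closure_x11_iff, y11]
end

section
/- Consider the abelian group ℤ with the symmetric ternary operation t(x,y,z) = xyz, which is distributive in each variable and satisfies t(t(x,y,z),u,v) = t(t(x,u,v),y,z). Then the subgroups 2ℤ and 4ℤ are ideals (t(k,x₁,x₂) ∈ K whenever k ∈ K), the binary Higgins commutator — the subgroup generated by all t(k₁,k₂,l) and t(k,l₁,l₂) with kᵢ ∈ 2ℤ, lⱼ ∈ 4ℤ — equals 16ℤ, while the ternary commutator — the subgroup generated by t(k,l,x) with k ∈ 2ℤ, l ∈ 4ℤ, x ∈ ℤ — equals 8ℤ. -/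
/-
Membership in nℤ is divisibility by n, and t multiplies divisors. So both commutators lie in
16ℤ resp. 8ℤ by 2·2·4 = 16 and 16 ∣ 2·4·4, resp. 2·4 = 8, and they contain these subgroups
because 16 = t(2,2,4) and 8 = t(2,4,1) are themselves generators.
-/

open AddSubgroup

lemma Int.mul_mul_mem_zmultiples {n k : ℤ} (hk : k ∈ zmultiples n) (x₁ x₂ : ℤ) :
    k * x₁ * x₂ ∈ zmultiples n := by
  rw [Int.mem_zmultiples_iff] at hk ⊢
  exact (hk.mul_right x₁).mul_right x₂

lemma Int.closure_eq_zmultiples_of_dvd_of_mem {S : Set ℤ} {d : ℤ} (hdvd : ∀ n ∈ S, d ∣ n)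
    (hd : d ∈ S) : AddSubgroup.closure S = zmultiples d :=
  le_antisymm ((closure_le _).2 fun n hn => Int.mem_zmultiples_iff.2 (hdvd n hn))
    (zmultiples_le.2 (subset_closure hd))

theorem stmt12 :
    -- 2ℤ and 4ℤ are ideals for t(x,y,z) = x*y*z
    (∀ k ∈ AddSubgroup.zmultiples (2 : ℤ), ∀ x₁ x₂ : ℤ,
      k * x₁ * x₂ ∈ AddSubgroup.zmultiples (2 : ℤ)) ∧
    (∀ k ∈ AddSubgroup.zmultiples (4 : ℤ), ∀ x₁ x₂ : ℤ,
      k * x₁ * x₂ ∈ AddSubgroup.zmultiples (4 : ℤ)) ∧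
    -- the binary Higgins commutator [2ℤ, 4ℤ] equals 16ℤ
    AddSubgroup.closure {n : ℤ |
        (∃ k₁ ∈ AddSubgroup.zmultiples (2 : ℤ), ∃ k₂ ∈ AddSubgroup.zmultiples (2 : ℤ),
          ∃ l ∈ AddSubgroup.zmultiples (4 : ℤ), n = k₁ * k₂ * l) ∨
        (∃ k ∈ AddSubgroup.zmultiples (2 : ℤ), ∃ l₁ ∈ AddSubgroup.zmultiples (4 : ℤ),
          ∃ l₂ ∈ AddSubgroup.zmultiples (4 : ℤ), n = k * l₁ * l₂)}
      = AddSubgroup.zmultiples (16 : ℤ) ∧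
    -- the ternary commutator [2ℤ, 4ℤ, ℤ] equals 8ℤ
    AddSubgroup.closure {n : ℤ |
        ∃ k ∈ AddSubgroup.zmultiples (2 : ℤ), ∃ l ∈ AddSubgroup.zmultiples (4 : ℤ),
          ∃ x : ℤ, n = k * l * x}
      = AddSubgroup.zmultiples (8 : ℤ) := by
  refine ⟨fun k hk => Int.mul_mul_mem_zmultiples hk, fun k hk => Int.mul_mul_mem_zmultiples hk,
    Int.closure_eq_zmultiples_of_dvd_of_mem ?_ ?_, Int.closure_eq_zmultiples_of_dvd_of_mem ?_ ?_⟩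
  · rintro n (⟨k₁, hk₁, k₂, hk₂, l, hl, rfl⟩ | ⟨k, hk, l₁, hl₁, l₂, hl₂, rfl⟩)
    · rw [Int.mem_zmultiples_iff] at hk₁ hk₂ hl
      exact mul_dvd_mul (mul_dvd_mul hk₁ hk₂) hl
    · rw [Int.mem_zmultiples_iff] at hk hl₁ hl₂
      exact (by norm_num : (16 : ℤ) ∣ 2 * 4 * 4).trans (mul_dvd_mul (mul_dvd_mul hk hl₁) hl₂)
  · exact Or.inl ⟨2, mem_zmultiples 2, 2, mem_zmultiples 2, 4, mem_zmultiples 4, by norm_num⟩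
  · rintro n ⟨k, hk, l, hl, x, rfl⟩
    rw [Int.mem_zmultiples_iff] at hk hl
    exact (mul_dvd_mul hk hl).mul_right x
  · exact ⟨2, mem_zmultiples 2, 4, mem_zmultiples 4, 1, by norm_num⟩
end

section
/- In an abelian group equipped with a symmetric trilinear ternary operation t satisfying t(t(x,y,z),u,v) = t(t(x,u,v),y,z), if K and L are ideals of X (i.e., t(k,x₁,x₂) ∈ K and t(l,x₁,x₂) ∈ L for all x₁,x₂ ∈ X), then the subgroup [K,L] generated by all elements t(k₁,k₂,l) and t(k,l₁,l₂) (kᵢ ∈ K, lⱼ ∈ L) is again an ideal of X. -/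
/-!
The operator `a ↦ t a x₁ x₂` is additive, so it maps `[K, L]` into itself as soon as it maps the
generators into the generators. Associativity moves it onto the `K`-entry of a generator,
`t (t k a b) x₁ x₂ = t (t k x₁ x₂) a b`, and `t k x₁ x₂` is again in `K`.
-/

theorem AddSubgroup.map_mem_closure_of_mapsTo {G : Type*} [AddGroup G] (f : G →+ G) {S : Set G}
    (hf : Set.MapsTo f S S) {w : G} (hw : w ∈ AddSubgroup.closure S) :
    f w ∈ AddSubgroup.closure S :=
  (AddSubgroup.closure_le ((AddSubgroup.closure S).comap f)).2
    (fun _ hs => AddSubgroup.subset_closure (hf hs)) hw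

def ternaryCommutatorGenerators {X : Type*} (t : X → X → X → X) (K L : Set X) : Set X :=
  {p : X | (∃ k₁ ∈ K, ∃ k₂ ∈ K, ∃ l ∈ L, p = t k₁ k₂ l) ∨ (∃ k ∈ K, ∃ l₁ ∈ L, ∃ l₂ ∈ L, p = t k l₁ l₂)}

theorem mapsTo_ternaryCommutatorGenerators {X : Type*} (t : X → X → X → X)
    (hassoc : ∀ a b c u v : X, t (t a b c) u v = t (t a u v) b c) {K L : Set X}
    (hK : ∀ k ∈ K, ∀ x₁ x₂ : X, t k x₁ x₂ ∈ K) (x₁ x₂ : X) :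
    Set.MapsTo (fun p => t p x₁ x₂) (ternaryCommutatorGenerators t K L)
      (ternaryCommutatorGenerators t K L) := by
  rintro _ (⟨k₁, hk₁, k₂, hk₂, l, hl, rfl⟩ | ⟨k, hk, l₁, hl₁, l₂, hl₂, rfl⟩)
  · exact .inl ⟨t k₁ x₁ x₂, hK k₁ hk₁ x₁ x₂, k₂, hk₂, l, hl, hassoc k₁ k₂ l x₁ x₂⟩
  · exact .inr ⟨t k x₁ x₂, hK k hk x₁ x₂, l₁, hl₁, l₂, hl₂, hassoc k l₁ l₂ x₁ x₂⟩

theorem stmt13_general {X : Type*} [AddCommGroup X] (t : X → X → X → X)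
    -- t is additive in each variable
    (hadd₁ : ∀ a a' b c : X, t (a + a') b c = t a b c + t a' b c)
    -- the associativity law
    (hassoc : ∀ a b c u v : X, t (t a b c) u v = t (t a u v) b c)
    (K L : AddSubgroup X)
    -- K and L are ideals
    (hK : ∀ k ∈ K, ∀ x₁ x₂ : X, t k x₁ x₂ ∈ K) :
    -- the commutator [K,L] is again an ideal
    ∀ w ∈ AddSubgroup.closure {p : X |
        (∃ k₁ ∈ K, ∃ k₂ ∈ K, ∃ l ∈ L, p = t k₁ k₂ l) ∨
        (∃ k ∈ K, ∃ l₁ ∈ L, ∃ l₂ ∈ L, p = t k l₁ l₂)},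
      ∀ x₁ x₂ : X, t w x₁ x₂ ∈ AddSubgroup.closure {p : X |
        (∃ k₁ ∈ K, ∃ k₂ ∈ K, ∃ l ∈ L, p = t k₁ k₂ l) ∨
        (∃ k ∈ K, ∃ l₁ ∈ L, ∃ l₂ ∈ L, p = t k l₁ l₂)} := by
  intro w hw x₁ x₂
  let tₓ : X →+ X := AddMonoidHom.mk' (fun a => t a x₁ x₂) fun a a' => hadd₁ a a' x₁ x₂
  exact AddSubgroup.map_mem_closure_of_mapsTo tₓ
    (mapsTo_ternaryCommutatorGenerators t hassoc hK x₁ x₂) hw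

theorem stmt13 {X : Type*} [AddCommGroup X] (t : X → X → X → X)
    -- t is symmetric
    (hsymm₁ : ∀ a b c : X, t a b c = t b a c)
    (hsymm₂ : ∀ a b c : X, t a b c = t a c b)
    -- t is additive in each variable
    (hadd₁ : ∀ a a' b c : X, t (a + a') b c = t a b c + t a' b c)
    (hadd₂ : ∀ a b b' c : X, t a (b + b') c = t a b c + t a b' c)
    (hadd₃ : ∀ a b c c' : X, t a b (c + c') = t a b c + t a b c')
    -- the associativity law
    (hassoc : ∀ a b c u v : X, t (t a b c) u v = t (t a u v) b c)
    (K L : AddSubgroup X)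
    -- K and L are ideals
    (hK : ∀ k ∈ K, ∀ x₁ x₂ : X, t k x₁ x₂ ∈ K)
    (hL : ∀ l ∈ L, ∀ x₁ x₂ : X, t l x₁ x₂ ∈ L) :
    -- the commutator [K,L] is again an ideal
    ∀ w ∈ AddSubgroup.closure {p : X |
        (∃ k₁ ∈ K, ∃ k₂ ∈ K, ∃ l ∈ L, p = t k₁ k₂ l) ∨
        (∃ k ∈ K, ∃ l₁ ∈ L, ∃ l₂ ∈ L, p = t k l₁ l₂)},
      ∀ x₁ x₂ : X, t w x₁ x₂ ∈ AddSubgroup.closure {p : X |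
        (∃ k₁ ∈ K, ∃ k₂ ∈ K, ∃ l ∈ L, p = t k₁ k₂ l) ∨
        (∃ k ∈ K, ∃ l₁ ∈ L, ∃ l₂ ∈ L, p = t k l₁ l₂)} :=
  stmt13_general t hadd₁ hassoc K L hK
end
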